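/- Let ã, r̃, p̃ be real numbers with 0 < ã < 1, r̃ > 1, and 0 < p̃ ≤ ã/r̃. Define ε(q) = log( 2p̃(1−q) / ( √((1−p̃)² + 4p̃²·q(1−q)·(1/ã − 1)) − (1−p̃) ) ) for q ∈ (0,1), and ε(1) = log( ã(1−p̃) / ( p̃(1−ã) ) ). Then for every q ∈ (0,1], ε(q) ≥ log( ã(1−p̃) / ( p̃(1−ã) ) ); that is, the minimum of ε over (0,1] equals log( ã(1−p̃)/( p̃(1−ã) ) ) and is attained at q = 1. -/

import Mathlib

/-!
Rationalising the denominator, for `q < 1` the argument of the logarithm becomes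
`(√D + (1 - p̃)) / (2 p̃ q (1/ã - 1))`, where `D = (1 - p̃)² + 4 p̃² q (1 - q) (1/ã - 1)`,
while the value at `q = 1` is `(1 - p̃) / (p̃ (1/ã - 1))`. Since `√D ≥ 1 - p̃` and `q < 1`,
the numerator `√D + (1 - p̃)` dominates `2 q (1 - p̃)`, and monotonicity of `log` concludes.
-/

/-- The privacy-budget threshold `ε_i(p̃, q)` under the risk profile `r*(p̃,q) = ã/(p̃·q)`
(which applies when `0 < p̃ ≤ ã/r̃`), with the `q = 1` branch given by its closed form. -/
noncomputable def epsThreshold14 (a p q : ℝ) : ℝ :=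
  if q < 1 then
    Real.log (2 * p * (1 - q) /
      (Real.sqrt ((1 - p) ^ 2 + 4 * p ^ 2 * q * (1 - q) * (1 / a - 1)) - (1 - p)))
  else
    Real.log (a * (1 - p) / (p * (1 - a)))

open Real

lemma div_sqrt_sq_add_sub_self {b y : ℝ} (hy : 0 < y) :
    y / (√(b ^ 2 + y) - b) = √(b ^ 2 + y) + b := by
  have hlt : b < √(b ^ 2 + y) := lt_sqrt_of_sq_lt (by linarith)
  rw [div_eq_iff (sub_ne_zero.2 hlt.ne'), ← sq_sub_sq, sq_sqrt (by positivity)]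
  ring

lemma one_div_sub_one_pos {a : ℝ} (ha0 : 0 < a) (ha1 : a < 1) : 0 < 1 / a - 1 := by
  rw [one_div, sub_pos]
  exact one_lt_inv_iff₀.2 ⟨ha0, ha1⟩

lemma epsThreshold14_of_lt_one {a p q : ℝ} (ha0 : 0 < a) (ha1 : a < 1) (hp0 : 0 < p)
    (hq0 : 0 < q) (hq1 : q < 1) :
    epsThreshold14 a p q =
      log ((√((1 - p) ^ 2 + 4 * p ^ 2 * q * (1 - q) * (1 / a - 1)) + (1 - p)) /
        (2 * p * q * (1 / a - 1))) := by
  have hc := one_div_sub_one_pos ha0 ha1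
  have hq : 0 < 1 - q := sub_pos.2 hq1
  have hy : 0 < 4 * p ^ 2 * q * (1 - q) * (1 / a - 1) := by positivity
  rw [epsThreshold14, if_pos hq1, ← div_sqrt_sq_add_sub_self hy]
  generalize √((1 - p) ^ 2 + 4 * p ^ 2 * q * (1 - q) * (1 / a - 1)) - (1 - p) = d
  generalize 1 / a - 1 = c at hc
  rw [div_div, mul_comm d]
  congr 1
  field_simp
  ring

lemma epsThreshold14_of_one_le {a p q : ℝ} (hq : 1 ≤ q) :
    epsThreshold14 a p q = log (a * (1 - p) / (p * (1 - a))) := by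
  rw [epsThreshold14, if_neg hq.not_gt]

lemma log_le_epsThreshold14 {a p q : ℝ} (ha0 : 0 < a) (ha1 : a < 1) (hp0 : 0 < p)
    (hp1 : p < 1) (hq0 : 0 < q) (hq1 : q ≤ 1) :
    log (a * (1 - p) / (p * (1 - a))) ≤ epsThreshold14 a p q := by
  rcases hq1.lt_or_eq with hq1 | rfl
  · have hc := one_div_sub_one_pos ha0 ha1
    have hb : 0 < 1 - p := sub_pos.2 hp1
    have hy : 0 ≤ 4 * p ^ 2 * q * (1 - q) * (1 / a - 1) := by
      have := sub_pos.2 hq1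
      positivity
    have hL : a * (1 - p) / (p * (1 - a)) = 2 * q * (1 - p) / (2 * p * q * (1 / a - 1)) := by
      have := (sub_pos.2 ha1).ne'
      field_simp
    rw [epsThreshold14_of_lt_one ha0 ha1 hp0 hq0 hq1, hL]
    have hS : 1 - p ≤ √((1 - p) ^ 2 + 4 * p ^ 2 * q * (1 - q) * (1 / a - 1)) :=
      le_sqrt_of_sq_le (le_add_of_nonneg_right hy)
    apply log_le_log (by positivity)
    gcongr
    nlinarith
  · exact (epsThreshold14_of_one_le le_rfl).ge

theorem stmt_14 (a r p : ℝ) (ha0 : 0 < a) (ha1 : a < 1) (hr : 1 < r)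
    (hp0 : 0 < p) (hp : p ≤ a / r) :
    (∀ q : ℝ, 0 < q → q ≤ 1 →
      Real.log (a * (1 - p) / (p * (1 - a))) ≤ epsThreshold14 a p q) ∧
    epsThreshold14 a p 1 = Real.log (a * (1 - p) / (p * (1 - a))) := by
  have hp1 : p < 1 := hp.trans_lt ((div_lt_self ha0 hr).trans ha1)
  exact ⟨fun q hq0 hq1 => log_le_epsThreshold14 ha0 ha1 hp0 hp1 hq0 hq1,
    epsThreshold14_of_one_le le_rfl⟩
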